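/- arXiv:2410.10322 — 4 statements merged into one kernel-verified Lean document; each statement's English description precedes it below -/
import Mathlib

section
/- Let d ≥ 2 be a natural number with 2 ln d ≤ (√2 − 1) · √d, and let ξ and ξ' be independent, each distributed according to the standard Gaussian measure γ_d on ℝ^d. Then the probability that |⟨ξ, ξ'⟩| ≥ √(2d) · ln d is at most 4 · d^{−(ln d)/2}. -/
open MeasureTheory ProbabilityTheory Real
open scoped RealInnerProductSpace

/-- The standard Gaussian measure on `ℝ^d`. -/
noncomputable def stdGaussian (d : ℕ) : Measure (EuclideanSpace ℝ (Fin d)) :=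
  (Measure.pi fun _ : Fin d => gaussianReal 0 1).map (MeasurableEquiv.toLp 2 (Fin d → ℝ))

/-!
Write `⟪ξ, ξ'⟫ = ∑ i, ξ i * ξ' i`, a sum of `d` independent copies of a product of two
independent standard normals. Integrating out the second factor first,
`E exp (t ξ₁ ξ'₁) = E exp (t² ξ₁² / 2) = (1 - t²)^(-1/2)`, so the moment generating function of
the inner product is `(1 - t²)^(-d/2) ≤ exp (d t²)` as long as `t² ≤ 1/2`. The two-sided Chernoff
bound at level `√(2d) L` with `t = L / √(2d)`, `L = ln d`, bounds each tail by
`exp (L²/2 - L²) = d^(-L/2)`; the hypothesis on `d` is what makes this `t` admissible.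
-/

lemma measure_abs_ge_le_exp_mul_mgf {Ω : Type*} [MeasurableSpace Ω] {μ : Measure Ω}
    [IsFiniteMeasure μ] {X : Ω → ℝ} {t : ℝ} (ε : ℝ) (ht : 0 ≤ t)
    (h_int : Integrable (fun ω ↦ exp (t * X ω)) μ)
    (h_int_neg : Integrable (fun ω ↦ exp (-t * X ω)) μ) :
    μ.real {ω | ε ≤ |X ω|} ≤ exp (-t * ε) * (mgf X μ t + mgf X μ (-t)) := by
  have h_neg : μ.real {ω | ε ≤ (-X) ω} ≤ exp (-t * ε) * mgf X μ (-t) := by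
    rw [← mgf_neg]
    refine measure_ge_le_exp_mul_mgf ε ht ?_
    simpa only [Pi.neg_apply, mul_neg, neg_mul] using h_int_neg
  have h_union : {ω | ε ≤ |X ω|} = {ω | ε ≤ X ω} ∪ {ω | ε ≤ (-X) ω} := by
    ext ω; simp [le_abs]
  calc μ.real {ω | ε ≤ |X ω|}
      ≤ μ.real {ω | ε ≤ X ω} + μ.real {ω | ε ≤ (-X) ω} := by
        rw [h_union]; exact measureReal_union_le _ _
    _ ≤ _ := by rw [mul_add]; exact add_le_add (measure_ge_le_exp_mul_mgf ε ht h_int) h_neg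

lemma gaussianPDFReal_zero_one_mul_exp_mul_sq (s x : ℝ) :
    gaussianPDFReal 0 1 x * exp (s * x ^ 2) = (√(2 * π))⁻¹ * exp (-(1 / 2 - s) * x ^ 2) := by
  rw [gaussianPDFReal, mul_assoc, ← exp_add]
  push_cast
  ring_nf

lemma integrable_exp_mul_sq_gaussianReal {s : ℝ} (hs : s < 1 / 2) :
    Integrable (fun x ↦ exp (s * x ^ 2)) (gaussianReal 0 1) := by
  rw [gaussianReal_of_var_ne_zero _ one_ne_zero,
    integrable_withDensity_iff_integrable_smul' (measurable_gaussianPDF 0 1)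
      (ae_of_all _ fun _ ↦ gaussianPDF_lt_top)]
  simp_rw [toReal_gaussianPDF, smul_eq_mul, gaussianPDFReal_zero_one_mul_exp_mul_sq]
  exact (integrable_exp_neg_mul_sq (by linarith)).const_mul _

-- For `1 / 2 ≤ s` both sides are junk `0`: the integrand is not integrable and `√` of a
-- nonpositive number is `0`.
lemma integral_exp_mul_sq_gaussianReal (s : ℝ) :
    ∫ x, exp (s * x ^ 2) ∂gaussianReal 0 1 = (√(1 - 2 * s))⁻¹ := by
  rw [integral_gaussianReal_eq_integral_smul one_ne_zero]
  simp_rw [smul_eq_mul, gaussianPDFReal_zero_one_mul_exp_mul_sq]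
  rw [integral_const_mul, integral_gaussian, ← sqrt_inv, ← sqrt_mul (by positivity),
    ← sqrt_inv]
  congr 1
  field_simp

lemma integral_exp_mul_gaussianReal (c : ℝ) :
    ∫ y, exp (c * y) ∂gaussianReal 0 1 = exp (c ^ 2 / 2) := by
  simpa [mgf] using congrFun (mgf_id_gaussianReal (μ := 0) (v := 1)) c

lemma integrable_exp_mul_mul_gaussianReal_prod {t : ℝ} (ht : t ^ 2 < 1) :
    Integrable (fun p : ℝ × ℝ ↦ exp (t * (p.1 * p.2)))
      ((gaussianReal 0 1).prod (gaussianReal 0 1)) := by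
  simp_rw [← mul_assoc]
  refine (integrable_prod_iff (by fun_prop)).2
    ⟨ae_of_all _ fun x ↦ integrable_exp_mul_gaussianReal (t * x), ?_⟩
  simp_rw [norm_of_nonneg (exp_nonneg _), integral_exp_mul_gaussianReal, mul_pow,
    mul_div_right_comm]
  exact integrable_exp_mul_sq_gaussianReal (by linarith)

lemma integral_exp_mul_mul_gaussianReal_prod {t : ℝ} (ht : t ^ 2 < 1) :
    ∫ p, exp (t * (p.1 * p.2)) ∂(gaussianReal 0 1).prod (gaussianReal 0 1) =
      (√(1 - t ^ 2))⁻¹ := by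
  rw [integral_prod _ (integrable_exp_mul_mul_gaussianReal_prod ht)]
  simp_rw [← mul_assoc, integral_exp_mul_gaussianReal, mul_pow, mul_div_right_comm]
  rw [integral_exp_mul_sq_gaussianReal]
  ring_nf

section

variable (d : ℕ)

instance : IsProbabilityMeasure (stdGaussian d) :=
  Measure.isProbabilityMeasure_map (MeasurableEquiv.toLp 2 (Fin d → ℝ)).measurable.aemeasurable

noncomputable def coordPairsEquiv :
    (Fin d → ℝ × ℝ) ≃ᵐ EuclideanSpace ℝ (Fin d) × EuclideanSpace ℝ (Fin d) :=
  (MeasurableEquiv.arrowProdEquivProdArrow ℝ ℝ (Fin d)).trans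
    ((MeasurableEquiv.toLp 2 (Fin d → ℝ)).prodCongr (MeasurableEquiv.toLp 2 (Fin d → ℝ)))

lemma measurePreserving_coordPairsEquiv :
    MeasurePreserving (coordPairsEquiv d)
      (Measure.pi fun _ ↦ (gaussianReal 0 1).prod (gaussianReal 0 1))
      ((stdGaussian d).prod (stdGaussian d)) :=
  have h := (MeasurableEquiv.toLp 2 (Fin d → ℝ)).measurable.measurePreserving
    (Measure.pi fun _ : Fin d ↦ gaussianReal 0 1)
  (h.prod h).comp (measurePreserving_arrowProdEquivProdArrow ℝ ℝ (Fin d) _ _)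

lemma exp_mul_inner_coordPairsEquiv (t : ℝ) (q : Fin d → ℝ × ℝ) :
    exp (t * ⟪(coordPairsEquiv d q).1, (coordPairsEquiv d q).2⟫) =
      ∏ i, exp (t * ((q i).1 * (q i).2)) := by
  simp only [PiLp.inner_apply, Real.inner_apply, Finset.mul_sum, exp_sum]
  rfl

variable {d}

lemma integrable_exp_mul_inner_stdGaussian_prod {t : ℝ} (ht : t ^ 2 < 1) :
    Integrable (fun p ↦ exp (t * ⟪p.1, p.2⟫)) ((stdGaussian d).prod (stdGaussian d)) := by
  rw [← (measurePreserving_coordPairsEquiv d).integrable_comp_emb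
    (MeasurableEquiv.measurableEmbedding _)]
  simp only [Function.comp_def, exp_mul_inner_coordPairsEquiv]
  exact Integrable.fintype_prod fun _ ↦ integrable_exp_mul_mul_gaussianReal_prod ht

lemma mgf_inner_stdGaussian_prod {t : ℝ} (ht : t ^ 2 < 1) :
    mgf (fun p ↦ ⟪p.1, p.2⟫) ((stdGaussian d).prod (stdGaussian d)) t =
      (√(1 - t ^ 2))⁻¹ ^ d := by
  rw [mgf, ← (measurePreserving_coordPairsEquiv d).integral_comp']
  simp only [exp_mul_inner_coordPairsEquiv]
  rw [integral_fintype_prod_eq_pow (fun p : ℝ × ℝ ↦ exp (t * (p.1 * p.2))),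
    integral_exp_mul_mul_gaussianReal_prod ht, Fintype.card_fin]

end

lemma exp_neg_two_mul_le_one_sub {u : ℝ} (hu0 : 0 ≤ u) (hu : u ≤ 1 / 2) :
    exp (-(2 * u)) ≤ 1 - u := by
  have hpos : 0 < 1 - u := by linarith
  rw [← le_log_iff_exp_le hpos]
  refine le_trans ?_ (one_sub_inv_le_log_of_pos hpos)
  rw [le_sub_iff_add_le, ← le_sub_iff_add_le', inv_le_iff_one_le_mul₀ hpos]
  nlinarith

lemma inv_sqrt_one_sub_pow_le_exp {u : ℝ} (hu0 : 0 ≤ u) (hu : u ≤ 1 / 2) (d : ℕ) :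
    (√(1 - u))⁻¹ ^ d ≤ exp (d * u) := by
  have h : exp (-u) ≤ √(1 - u) := by
    rw [le_sqrt' (exp_pos _), ← exp_nat_mul]
    convert exp_neg_two_mul_le_one_sub hu0 hu using 2
    ring
  rw [exp_nat_mul]
  gcongr
  rwa [inv_le_comm₀ (by simpa using (exp_pos (-u)).trans_le h) (exp_pos _), ← exp_neg]

lemma stdGaussian_prod_measureReal_abs_inner_ge_le (d : ℕ) {t : ℝ} (ht0 : 0 ≤ t)
    (ht : t ^ 2 ≤ 1 / 2) (ε : ℝ) :
    ((stdGaussian d).prod (stdGaussian d)).real {p | ε ≤ |⟪p.1, p.2⟫|} ≤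
      2 * exp (d * t ^ 2 - t * ε) := by
  set μ := (stdGaussian d).prod (stdGaussian d)
  have hmgf : ∀ s : ℝ, s ^ 2 = t ^ 2 → mgf (fun p ↦ ⟪p.1, p.2⟫) μ s ≤ exp (d * t ^ 2) := by
    intro s hs
    rw [mgf_inner_stdGaussian_prod (by linarith), hs]
    exact inv_sqrt_one_sub_pow_le_exp (sq_nonneg t) ht d
  calc _ ≤ exp (-t * ε) * (mgf (fun p ↦ ⟪p.1, p.2⟫) μ t + mgf (fun p ↦ ⟪p.1, p.2⟫) μ (-t)) :=
        measure_abs_ge_le_exp_mul_mgf ε ht0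
          (integrable_exp_mul_inner_stdGaussian_prod (by linarith))
          (integrable_exp_mul_inner_stdGaussian_prod (by rw [neg_sq]; linarith))
    _ ≤ exp (-t * ε) * (exp (d * t ^ 2) + exp (d * t ^ 2)) := by
        gcongr
        exacts [hmgf t rfl, hmgf (-t) (neg_sq t)]
    _ = 2 * exp (d * t ^ 2 - t * ε) := by
        rw [sub_eq_add_neg, exp_add]
        ring_nf

theorem gaussian_inner_pair_tail_bound (d : ℕ) (hd : 2 ≤ d)
    (hlog : 2 * Real.log d ≤ (Real.sqrt 2 - 1) * Real.sqrt d) :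
    ((stdGaussian d).prod (stdGaussian d))
        {p : EuclideanSpace ℝ (Fin d) × EuclideanSpace ℝ (Fin d) |
          Real.sqrt (2 * d) * Real.log d ≤ |⟪p.1, p.2⟫|} ≤
      ENNReal.ofReal (4 * (d : ℝ) ^ (-(Real.log d) / 2)) := by
  set L := Real.log d
  have hd0 : (0 : ℝ) < d := Nat.cast_pos.2 (by omega)
  have hL : 0 ≤ L := Real.log_natCast_nonneg d
  have hLd : 4 * L ^ 2 ≤ d := by
    have hsqrt2 : √2 ≤ 2 := by nlinarith [sq_sqrt (zero_le_two (α := ℝ)), sqrt_nonneg 2]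
    have h2L : 2 * L ≤ √d := hlog.trans (by nlinarith [sqrt_nonneg (d : ℝ)])
    nlinarith [sq_sqrt hd0.le]
  have hsqrt : √(2 * d) ^ 2 = 2 * d := sq_sqrt (by positivity)
  have ht : (L / √(2 * d)) ^ 2 = L ^ 2 / (2 * d) := by rw [div_pow, hsqrt]
  have hbound := stdGaussian_prod_measureReal_abs_inner_ge_le d (t := L / √(2 * d))
    (by positivity) (by rw [ht, div_le_iff₀ (by positivity)]; linarith) (√(2 * d) * L)
  have hexponent :
      (d : ℝ) * (L / √(2 * d)) ^ 2 - L / √(2 * d) * (√(2 * d) * L) = -L ^ 2 / 2 := by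
    rw [ht]
    field_simp
    ring
  rw [hexponent] at hbound
  have hrpow : (d : ℝ) ^ (-L / 2) = exp (-L ^ 2 / 2) := by
    rw [rpow_def_of_pos hd0]
    congr 1
    change L * (-L / 2) = _
    ring
  rw [ENNReal.le_ofReal_iff_toReal_le (measure_ne_top _ _) (by positivity), hrpow]
  exact hbound.trans (by linarith [exp_pos (-L ^ 2 / 2)])
end

section
/- Let l ≥ 4 be a natural number and let X : Fin l → ℝ be i.i.d. standard normal random variables (distributed according to the product over Fin l of the real Gaussian measure N(0,1)). For every real t with 0 ≤ t ≤ 2 ln l, the probability that X_i ≤ √(2 ln l − t) for every i ∈ Fin l is at most exp( − e^{t/2} / ( √(2π) · (√(2 ln l) + 1) ) ). -/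
/-!
With `q = P(N(0,1) > u)`, independence gives `P(max X ≤ u) = (1 - q)^l ≤ exp (-l q)`. The
Mills-type bound `q ≥ e^{-u²/2} / (√(2π) (u + 1))`, taken at `u = √(2 ln l - t)` where
`e^{-u²/2} = e^{t/2} / l`, gives `l q ≥ e^{t/2} / (√(2π) (u + 1))`, and `u ≤ √(2 ln l)`.
-/

open MeasureTheory ProbabilityTheory Real Set Filter

lemma integrable_exp_neg_sq_div_two : Integrable fun x : ℝ => exp (-x ^ 2 / 2) := by
  convert integrable_exp_neg_mul_sq (by norm_num : (0 : ℝ) < 1 / 2) using 3 with x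
  ring

lemma hasDerivAt_neg_exp_neg_sq_div_two_div_add_one {x : ℝ} (hx : x + 1 ≠ 0) :
    HasDerivAt (fun y => -exp (-y ^ 2 / 2) / (y + 1))
      (exp (-x ^ 2 / 2) * (x ^ 2 + x + 1) / (x + 1) ^ 2) x := by
  have hexp : HasDerivAt (fun y => exp (-y ^ 2 / 2)) (exp (-x ^ 2 / 2) * -x) x := by
    refine ((hasDerivAt_pow 2 x).neg.div_const 2).exp.congr_deriv ?_
    simp only [Pi.neg_apply]
    push_cast
    ring
  refine (hexp.neg.div ((hasDerivAt_id x).add_const 1) hx).congr_deriv ?_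
  simp only [id, Pi.neg_apply]
  field_simp
  ring

lemma tendsto_neg_exp_neg_sq_div_two_div_add_one :
    Tendsto (fun x : ℝ => -exp (-x ^ 2 / 2) / (x + 1)) atTop (nhds 0) := by
  have hexp : Tendsto (fun x : ℝ => exp (-x ^ 2 / 2)) atTop (nhds 0) := by
    refine tendsto_exp_atBot.comp ?_
    simpa only [neg_div] using tendsto_neg_atBot_iff.mpr
      ((tendsto_pow_atTop two_ne_zero).atTop_div_const (by norm_num : (0 : ℝ) < 2))
  have hinv : Tendsto (fun x : ℝ => (x + 1)⁻¹) atTop (nhds 0) :=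
    tendsto_inv_atTop_zero.comp (tendsto_atTop_add_const_right _ 1 tendsto_id)
  simpa [div_eq_mul_inv] using (hexp.mul hinv).neg

/-- On `[0, ∞)` the integrand dominates the derivative of `-exp (-x ^ 2 / 2) / (x + 1)`. -/
lemma exp_neg_sq_div_two_div_le_integral_Ioi {u : ℝ} (hu : 0 ≤ u) :
    exp (-u ^ 2 / 2) / (u + 1) ≤ ∫ x in Ioi u, exp (-x ^ 2 / 2) := by
  set F' : ℝ → ℝ := fun x => exp (-x ^ 2 / 2) * (x ^ 2 + x + 1) / (x + 1) ^ 2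
  have hF'_nonneg : ∀ x ∈ Ioi u, 0 ≤ F' x := fun x hx => by
    have : 0 ≤ x := hu.trans hx.le
    positivity
  have hF'_le : ∀ x ∈ Ioi u, F' x ≤ exp (-x ^ 2 / 2) := fun x hx => by
    have : 0 ≤ x := hu.trans hx.le
    rw [div_le_iff₀ (by positivity)]
    exact mul_le_mul_of_nonneg_left (by nlinarith) (exp_pos _).le
  have hF'_int : IntegrableOn F' (Ioi u) := by
    refine integrable_exp_neg_sq_div_two.restrict.mono' (by fun_prop) ?_
    filter_upwards [self_mem_ae_restrict measurableSet_Ioi] with x hx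
    rw [norm_of_nonneg (hF'_nonneg x hx)]
    exact hF'_le x hx
  have hFTC := integral_Ioi_of_hasDerivAt_of_tendsto'
    (fun x (hx : u ≤ x) => hasDerivAt_neg_exp_neg_sq_div_two_div_add_one (by linarith))
    hF'_int tendsto_neg_exp_neg_sq_div_two_div_add_one
  calc exp (-u ^ 2 / 2) / (u + 1) = ∫ x in Ioi u, F' x := by rw [hFTC]; ring
    _ ≤ ∫ x in Ioi u, exp (-x ^ 2 / 2) :=
      setIntegral_mono_on hF'_int integrable_exp_neg_sq_div_two.restrict measurableSet_Ioi hF'_le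

lemma exp_neg_sq_div_two_div_le_gaussianReal_real_Ioi {u : ℝ} (hu : 0 ≤ u) :
    exp (-u ^ 2 / 2) / (√(2 * π) * (u + 1)) ≤ (gaussianReal 0 1).real (Ioi u) := by
  rw [measureReal_def, gaussianReal_apply_eq_integral 0 one_ne_zero,
    ENNReal.toReal_ofReal (setIntegral_nonneg measurableSet_Ioi fun x _ =>
      gaussianPDFReal_nonneg 0 1 x)]
  simp only [gaussianPDFReal, NNReal.coe_one, mul_one, sub_zero]
  rw [integral_const_mul, mul_comm (√(2 * π)), ← div_div, div_eq_inv_mul _ (√(2 * π))]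
  exact mul_le_mul_of_nonneg_left (exp_neg_sq_div_two_div_le_integral_Ioi hu) (by positivity)

lemma measure_pi_univ_pi_le_exp {ι α : Type*} [Fintype ι] [MeasurableSpace α] (μ : Measure α)
    [IsProbabilityMeasure μ] {s : Set α} (hs : MeasurableSet s) :
    Measure.pi (fun _ : ι => μ) (univ.pi fun _ => s) ≤
      ENNReal.ofReal (exp (-(Fintype.card ι * μ.real sᶜ))) := by
  rw [Measure.pi_pi, Finset.prod_const, Finset.card_univ, ← ofReal_measureReal,
    ← ENNReal.ofReal_pow measureReal_nonneg, neg_mul_eq_mul_neg, exp_nat_mul]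
  refine ENNReal.ofReal_le_ofReal (pow_le_pow_left₀ measureReal_nonneg ?_ _)
  rw [probReal_compl_eq_one_sub hs]
  simpa using one_sub_le_exp_neg (1 - μ.real s)

theorem gaussian_max_lower_tail_bound (l : ℕ) (hl : 4 ≤ l) (t : ℝ) (ht0 : 0 ≤ t)
    (ht1 : t ≤ 2 * Real.log l) :
    (Measure.pi fun _ : Fin l => gaussianReal 0 1)
        {X : Fin l → ℝ | ∀ i : Fin l, X i ≤ Real.sqrt (2 * Real.log l - t)} ≤
      ENNReal.ofReal
        (Real.exp (-(Real.exp (t / 2) /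
          (Real.sqrt (2 * Real.pi) * (Real.sqrt (2 * Real.log l) + 1))))) := by
  have hl_pos : (0 : ℝ) < l := by exact_mod_cast (by omega : 0 < l)
  set u := √(2 * log l - t)
  have hu_sq : u ^ 2 = 2 * log l - t := sq_sqrt (by linarith)
  have hu_le : u ≤ √(2 * log l) := sqrt_le_sqrt (by linarith)
  have hset : {X : Fin l → ℝ | ∀ i, X i ≤ u} = univ.pi fun _ => Iic u := by
    ext X; simp [Pi.le_def]
  rw [hset]
  refine (measure_pi_univ_pi_le_exp _ measurableSet_Iic).trans
    (ENNReal.ofReal_le_ofReal (exp_le_exp.mpr (neg_le_neg ?_)))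
  rw [compl_Iic, Fintype.card_fin]
  have hexp_u : exp (-u ^ 2 / 2) = exp (t / 2) / l := by
    rw [hu_sq, show -(2 * log l - t) / 2 = t / 2 - log l by ring, exp_sub, exp_log hl_pos]
  calc exp (t / 2) / (√(2 * π) * (√(2 * log l) + 1))
      ≤ exp (t / 2) / (√(2 * π) * (u + 1)) := by gcongr
    _ = l * (exp (-u ^ 2 / 2) / (√(2 * π) * (u + 1))) := by rw [hexp_u]; field_simp
    _ ≤ l * (gaussianReal 0 1).real (Ioi u) :=
      mul_le_mul_of_nonneg_left (exp_neg_sq_div_two_div_le_gaussianReal_real_Ioi (sqrt_nonneg _))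
        hl_pos.le
end

section
/- For all real numbers a and b with a ≥ b and a + b ≥ 0, one has exp((a − b)/2) ≤ (1 + e^a)/(1 + e^b) ≤ exp(a − b). Equivalently, writing ℓ'(q) := 1/(1 + e^q) for the magnitude of the logistic-loss derivative at margin q, if margins satisfy q_i ≥ q_j and q_i + q_j ≥ 0 then e^{(q_i − q_j)/2} ≤ ℓ'(q_j)/ℓ'(q_i) ≤ e^{q_i − q_j}. -/
theorem logistic_loss_derivative_ratio_bound (a b : ℝ) (hab : b ≤ a) (hsum : 0 ≤ a + b) :
    Real.exp ((a - b) / 2) ≤ (1 + Real.exp a) / (1 + Real.exp b) ∧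
      (1 + Real.exp a) / (1 + Real.exp b) ≤ Real.exp (a - b) := by
  have hb : (0:ℝ) < 1 + Real.exp b := by positivity
  constructor
  · rw [le_div_iff₀ hb]
    have hx : (1:ℝ) ≤ Real.exp ((a - b) / 2) := by
      rw [← Real.exp_zero]; exact Real.exp_le_exp.2 (by linarith)
    have hy : (1:ℝ) ≤ Real.exp ((a + b) / 2) := by
      rw [← Real.exp_zero]; exact Real.exp_le_exp.2 (by linarith)
    have hmul : Real.exp ((a - b) / 2) * Real.exp ((a + b) / 2) = Real.exp a := by
      rw [← Real.exp_add]; ring_nf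
    have hfac : (Real.exp ((a - b) / 2) - 1) * (Real.exp ((a + b) / 2) - 1) ≥ 0 :=
      mul_nonneg (by linarith) (by linarith)
    have heb : Real.exp ((a - b) / 2) * Real.exp b = Real.exp ((a + b) / 2) := by
      rw [← Real.exp_add]; ring_nf
    nlinarith [hfac, hmul, heb]
  · rw [div_le_iff₀ hb]
    have h1 : (1:ℝ) ≤ Real.exp (a - b) := by
      rw [← Real.exp_zero]; exact Real.exp_le_exp.2 (by linarith)
    have h2 : Real.exp (a - b) * Real.exp b = Real.exp a := by
      rw [← Real.exp_add]; ring_nf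
    nlinarith
end

section
/- (Clean accuracy of the feature-averaging network) Let d, k ≥ 1 with d ≥ 2 and 2k · ln d < √d, let μ : Fin k → ℝ^d be orthogonal equinorm cluster features with binary cluster labels s. Then the feature-averaging network f_FA classifies a fresh data point correctly with high probability: the probability over (J, ξ) ~ (uniform on Fin k) ⊗ γ_d that sgn(f_FA(μ_J + ξ)) = s J is at least 1 − 2k · d^{−(ln d)/2}. -/
/-!
The noise `ξ` enters the network only through the two Gaussian variables `⟪w₊, ξ⟫` and
`⟪w₋, ξ⟫`, where `w± = ∑_{j ∈ J±} μ j`. By orthogonality the clean point `μ J` contributes `d`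
to the unit of its own label and `0` to the other one, so the prediction is correct as soon as
`|⟪w±, ξ⟫| < d / 2`. Since `⟪w, ξ⟫ ∼ N(0, ‖w‖²)` and `‖w±‖² = |J±| d`, a Chernoff bound makes
each failure event at most `2 exp (-d / (8 |J±|)) ≤ 2 |J±| d ^ (-ln d / 2)` (here
`4 k (ln d)² ≤ d` is used, and an empty `J±` costs nothing); adding the two bounds gives
`2 k d ^ (-ln d / 2)`.
-/

open MeasureTheory ProbabilityTheory Real Finset
open scoped RealInnerProductSpace

/-- The sign function: `1` on positive reals, `-1` otherwise. -/
noncomputable def sgn (z : ℝ) : ℝ := if 0 < z then 1 else -1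

/-- The ReLU activation. -/
noncomputable def relu (z : ℝ) : ℝ := max z 0

/-- The feature-averaging network. -/
noncomputable def fFA {d k : ℕ} (μ : Fin k → EuclideanSpace ℝ (Fin d)) (s : Fin k → ℝ)
    (x : EuclideanSpace ℝ (Fin d)) : ℝ :=
  relu ⟪∑ j ∈ univ.filter (fun j => s j = 1), μ j, x⟫ -
    relu ⟪∑ j ∈ univ.filter (fun j => s j = -1), μ j, x⟫

open scoped NNReal ENNReal

lemma hasSubgaussianMGF_id_gaussianReal (v : ℝ≥0) :
    HasSubgaussianMGF id v (gaussianReal 0 v) where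
  integrable_exp_mul t := integrable_exp_mul_gaussianReal t
  mgf_le t := by simp [mgf_id_gaussianReal]

lemma ProbabilityTheory.HasSubgaussianMGF.measureReal_abs_ge_le {Ω : Type*} [MeasurableSpace Ω]
    {μ : Measure Ω} [IsFiniteMeasure μ] {X : Ω → ℝ} {c : ℝ≥0} (h : HasSubgaussianMGF X c μ)
    {ε : ℝ} (hε : 0 ≤ ε) :
    μ.real {ω | ε ≤ |X ω|} ≤ 2 * exp (-ε ^ 2 / (2 * c)) := by
  have hsplit : {ω | ε ≤ |X ω|} = {ω | ε ≤ X ω} ∪ {ω | ε ≤ (-X) ω} := by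
    ext ω; simp only [Set.mem_ofPred_eq, Set.mem_union, le_abs, Pi.neg_apply]
  calc μ.real {ω | ε ≤ |X ω|} ≤ μ.real {ω | ε ≤ X ω} + μ.real {ω | ε ≤ (-X) ω} := by
        rw [hsplit]; exact measureReal_union_le _ _
    _ ≤ exp (-ε ^ 2 / (2 * c)) + exp (-ε ^ 2 / (2 * c)) :=
        add_le_add (h.measure_ge_le hε) (h.neg.measure_ge_le hε)
    _ = 2 * exp (-ε ^ 2 / (2 * c)) := (two_mul _).symm

section StdGaussian

variable {E : Type*} [NormedAddCommGroup E] [InnerProductSpace ℝ E] [FiniteDimensional ℝ E]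
  [MeasurableSpace E] [BorelSpace E]

lemma map_inner_stdGaussian (w : E) :
    (ProbabilityTheory.stdGaussian E).map (fun x ↦ ⟪w, x⟫) = gaussianReal 0 (‖w‖₊ ^ 2) := by
  have h := IsGaussian.map_eq_gaussianReal (μ := ProbabilityTheory.stdGaussian E) (innerSL ℝ w)
  rw [integral_strongDual_stdGaussian, variance_dual_stdGaussian, innerSL_apply_norm] at h
  convert h using 2
  · ext; simp
  · ext; simp

lemma hasSubgaussianMGF_inner_stdGaussian (w : E) :
    HasSubgaussianMGF (fun x ↦ ⟪w, x⟫) (‖w‖₊ ^ 2) (ProbabilityTheory.stdGaussian E) := by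
  rw [← HasSubgaussianMGF.id_map_iff (by fun_prop), map_inner_stdGaussian]
  exact hasSubgaussianMGF_id_gaussianReal _

end StdGaussian

lemma stdGaussian_eq_stdGaussian_euclideanSpace (d : ℕ) :
    stdGaussian d = ProbabilityTheory.stdGaussian (EuclideanSpace ℝ (Fin d)) :=
  map_pi_eq_stdGaussian

lemma one_sub_sub_le_measureReal_inter {α : Type*} [MeasurableSpace α] (ν : Measure α)
    [IsProbabilityMeasure ν] (s t : Set α) :
    1 - ν.real sᶜ - ν.real tᶜ ≤ ν.real (s ∩ t) := by
  have hcover : Set.univ ⊆ (s ∩ t) ∪ (sᶜ ∪ tᶜ) := fun x _ ↦ by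
    by_cases hs : x ∈ s <;> by_cases ht : x ∈ t <;> simp [hs, ht]
  have := (measureReal_mono (μ := ν) hcover).trans <|
    (measureReal_union_le _ _).trans (add_le_add_right (measureReal_union_le sᶜ tᶜ) _)
  rw [probReal_univ] at this
  linarith

section OrthogonalFamily

variable {ι E : Type*} [NormedAddCommGroup E] [InnerProductSpace ℝ E] {μ : ι → E} {r : ℝ}

lemma inner_sum_eq_ite_of_orthogonal [DecidableEq ι] (hnorm : ∀ j, ‖μ j‖ = r)
    (horth : ∀ i j, i ≠ j → ⟪μ i, μ j⟫ = 0) (A : Finset ι) (j : ι) :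
    ⟪∑ i ∈ A, μ i, μ j⟫ = if j ∈ A then r ^ 2 else 0 := by
  rw [sum_inner, ← sum_ite_eq' A j fun _ ↦ r ^ 2]
  refine sum_congr rfl fun i _ ↦ ?_
  split_ifs with h
  · rw [h, real_inner_self_eq_norm_sq, hnorm]
  · exact horth i j h

lemma norm_sum_sq_of_orthogonal (hnorm : ∀ j, ‖μ j‖ = r)
    (horth : ∀ i j, i ≠ j → ⟪μ i, μ j⟫ = 0) (A : Finset ι) :
    ‖∑ i ∈ A, μ i‖ ^ 2 = #A * r ^ 2 := by
  classical
  rw [← real_inner_self_eq_norm_sq, inner_sum,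
    sum_congr rfl fun j hj ↦ (inner_sum_eq_ite_of_orthogonal hnorm horth A j).trans (if_pos hj),
    sum_const, nsmul_eq_mul]

end OrthogonalFamily

lemma measureReal_abs_inner_sum_ge_le {ι E : Type*} [NormedAddCommGroup E]
    [InnerProductSpace ℝ E] [FiniteDimensional ℝ E] [MeasurableSpace E] [BorelSpace E]
    {μ : ι → E} {r L : ℝ} (hnorm : ∀ j, ‖μ j‖ = r) (horth : ∀ i j, i ≠ j → ⟪μ i, μ j⟫ = 0)
    (hr : r ≠ 0) (A : Finset ι) (hA : 4 * #A * L ^ 2 ≤ r ^ 2) :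
    (ProbabilityTheory.stdGaussian E).real {ξ | r ^ 2 / 2 ≤ |⟪∑ i ∈ A, μ i, ξ⟫|}
      ≤ 2 * #A * exp (-L ^ 2 / 2) := by
  have hmargin : 0 < r ^ 2 / 2 := by positivity
  rcases A.eq_empty_or_nonempty with rfl | hA₀
  · simp [hmargin.not_ge]
  have hcard : (1 : ℝ) ≤ #A := by exact_mod_cast hA₀.card_pos
  have htail := (hasSubgaussianMGF_inner_stdGaussian (∑ i ∈ A, μ i)).measureReal_abs_ge_le
    hmargin.le
  rw [NNReal.coe_pow, coe_nnnorm, norm_sum_sq_of_orthogonal hnorm horth] at htail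
  have hexponent : -(r ^ 2 / 2) ^ 2 / (2 * (#A * r ^ 2)) ≤ -L ^ 2 / 2 := by
    rw [neg_div, neg_div, neg_le_neg_iff, div_le_div_iff₀ (by norm_num) (by positivity)]
    nlinarith [sq_nonneg r]
  calc _ ≤ 2 * exp (-(r ^ 2 / 2) ^ 2 / (2 * (#A * r ^ 2))) := htail
    _ ≤ 2 * 1 * exp (-L ^ 2 / 2) := by rw [mul_one]; gcongr
    _ ≤ 2 * #A * exp (-L ^ 2 / 2) := by gcongr

lemma one_sub_le_measureReal_abs_inner_sum_lt_inter {ι E : Type*} [Fintype ι]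
    [NormedAddCommGroup E] [InnerProductSpace ℝ E] [FiniteDimensional ℝ E] [MeasurableSpace E]
    [BorelSpace E] {μ : ι → E} {r L : ℝ} (hnorm : ∀ j, ‖μ j‖ = r)
    (horth : ∀ i j, i ≠ j → ⟪μ i, μ j⟫ = 0) (hr : r ≠ 0) (P N : Finset ι)
    (hPN : #P + #N ≤ Fintype.card ι) (hL : 4 * Fintype.card ι * L ^ 2 ≤ r ^ 2) :
    1 - 2 * Fintype.card ι * exp (-L ^ 2 / 2) ≤ (ProbabilityTheory.stdGaussian E).real
      ({ξ | |⟪∑ i ∈ P, μ i, ξ⟫| < r ^ 2 / 2} ∩ {ξ | |⟪∑ i ∈ N, μ i, ξ⟫| < r ^ 2 / 2}) := by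
  have htail (A : Finset ι) :=
    measureReal_abs_inner_sum_ge_le (L := L) hnorm horth hr A <| by
      have : (#A : ℝ) ≤ Fintype.card ι := by exact_mod_cast card_le_univ A
      nlinarith [sq_nonneg L]
  have hPN' : (#P + #N : ℝ) ≤ Fintype.card ι := by exact_mod_cast hPN
  have hunion := one_sub_sub_le_measureReal_inter (ProbabilityTheory.stdGaussian E)
    {ξ | |⟪∑ i ∈ P, μ i, ξ⟫| < r ^ 2 / 2} {ξ | |⟪∑ i ∈ N, μ i, ξ⟫| < r ^ 2 / 2}
  simp only [Set.compl_ofPred, not_lt] at hunion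
  refine le_trans ?_ hunion
  nlinarith [htail P, htail N, exp_pos (-L ^ 2 / 2)]

lemma relu_add_sub_relu_pos {m x y : ℝ} (hx : |x| < m / 2) (hy : |y| < m / 2) :
    0 < relu (m + x) - relu y := by
  have h₁ : m + x ≤ relu (m + x) := le_max_left _ _
  have h₂ : relu y < m / 2 := max_lt ((le_abs_self y).trans_lt hy) ((abs_nonneg y).trans_lt hy)
  linarith [neg_abs_le x]

lemma sgn_fFA_add_eq {d k : ℕ} {μ : Fin k → EuclideanSpace ℝ (Fin d)} {s : Fin k → ℝ} {r : ℝ}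
    (hnorm : ∀ j, ‖μ j‖ = r) (horth : ∀ i j, i ≠ j → ⟪μ i, μ j⟫ = 0) {j : Fin k}
    (hs : s j = 1 ∨ s j = -1) {ξ : EuclideanSpace ℝ (Fin d)}
    (hpos : |⟪∑ i ∈ univ.filter (fun i => s i = 1), μ i, ξ⟫| < r ^ 2 / 2)
    (hneg : |⟪∑ i ∈ univ.filter (fun i => s i = -1), μ i, ξ⟫| < r ^ 2 / 2) :
    sgn (fFA μ s (μ j + ξ)) = s j := by
  rw [fFA, inner_add_right, inner_add_right, inner_sum_eq_ite_of_orthogonal hnorm horth,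
    inner_sum_eq_ite_of_orthogonal hnorm horth]
  rcases hs with h | h
  · rw [if_pos (by simp [h]), if_neg (by norm_num [h]), zero_add, sgn,
      if_pos (relu_add_sub_relu_pos hpos hneg), h]
  · rw [if_neg (by norm_num [h]), if_pos (by simp [h]), zero_add, sgn,
      if_neg (by linarith [relu_add_sub_relu_pos hneg hpos]), h]

lemma card_filter_eq_one_add_card_filter_eq_neg_one {ι : Type*} [Fintype ι] {s : ι → ℝ}
    (hs : ∀ j, s j = 1 ∨ s j = -1) :
    #(univ.filter fun j => s j = 1) + #(univ.filter fun j => s j = -1) = Fintype.card ι := by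
  rw [show univ.filter (fun j => s j = -1) = univ.filter fun j => ¬ s j = 1 from
    filter_congr fun j _ => by rcases hs j with h | h <;> norm_num [h],
    card_filter_add_card_filter_not, card_univ]

lemma uniform_prod_univ_prod {k : ℕ} (hk : k ≠ 0) {Ω : Type*} [MeasurableSpace Ω]
    (ν : Measure Ω) [SFinite ν] (G : Set Ω) :
    (((k : ℝ≥0∞)⁻¹ • (Measure.count : Measure (Fin k))).prod ν) (Set.univ ×ˢ G) = ν G := by
  rw [Measure.prod_prod, Measure.smul_apply, Measure.count_univ, ENat.card_eq_coe_fintype_card,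
    Fintype.card_fin, ENat.toENNReal_coe, smul_eq_mul,
    ENNReal.inv_mul_cancel (by exact_mod_cast hk) (ENNReal.natCast_ne_top k), one_mul]

lemma four_mul_log_sq_le {d k : ℕ} (hk : 1 ≤ k) (hlog : 2 * k * log d < √d) :
    4 * k * log d ^ 2 ≤ d := by
  have hL := Real.log_natCast_nonneg d
  have hk' : (1 : ℝ) ≤ k := by exact_mod_cast hk
  have hsq : (2 * k * log d) ^ 2 < d := by
    calc _ < √(d : ℝ) ^ 2 := by gcongr
      _ = d := sq_sqrt (Nat.cast_nonneg d)
  nlinarith [sq_nonneg (log d)]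

lemma rpow_neg_log_div_two {x : ℝ} (hx : 0 < x) : x ^ (-log x / 2) = exp (-log x ^ 2 / 2) := by
  rw [rpow_def_of_pos hx]
  ring_nf

theorem featureAveraging_clean_accuracy (d k : ℕ) (hd : 2 ≤ d) (hk : 1 ≤ k)
    (hlog : 2 * k * Real.log d < Real.sqrt d)
    (μ : Fin k → EuclideanSpace ℝ (Fin d))
    (hnorm : ∀ j, ‖μ j‖ = Real.sqrt d)
    (horth : ∀ i j, i ≠ j → ⟪μ i, μ j⟫ = 0)
    (s : Fin k → ℝ) (hs : ∀ j, s j = 1 ∨ s j = -1) :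
    ENNReal.ofReal (1 - 2 * k * (d : ℝ) ^ (-(Real.log d) / 2)) ≤
      (((k : ENNReal)⁻¹ • (Measure.count : Measure (Fin k))).prod (stdGaussian d))
        {p : Fin k × EuclideanSpace ℝ (Fin d) | sgn (fFA μ s (μ p.1 + p.2)) = s p.1} := by
  have hd₀ : (0 : ℝ) < d := by exact_mod_cast (by omega : 0 < d)
  set G := {ξ : EuclideanSpace ℝ (Fin d) |
      |⟪∑ j ∈ univ.filter (fun j => s j = 1), μ j, ξ⟫| < √(d : ℝ) ^ 2 / 2} ∩
    {ξ | |⟪∑ j ∈ univ.filter (fun j => s j = -1), μ j, ξ⟫| < √(d : ℝ) ^ 2 / 2}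
  have hG : 1 - 2 * k * exp (-log d ^ 2 / 2) ≤ (ProbabilityTheory.stdGaussian _).real G := by
    simpa only [Fintype.card_fin] using one_sub_le_measureReal_abs_inner_sum_lt_inter (L := log d)
      hnorm horth (sqrt_ne_zero'.2 hd₀) _ _ (card_filter_eq_one_add_card_filter_eq_neg_one hs).le
      (by rw [Fintype.card_fin, sq_sqrt hd₀.le]; exact four_mul_log_sq_le hk hlog)
  rw [rpow_neg_log_div_two hd₀, stdGaussian_eq_stdGaussian_euclideanSpace]
  calc _ ≤ ProbabilityTheory.stdGaussian _ G := ENNReal.ofReal_le_of_le_toReal hG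
    _ = _ := (uniform_prod_univ_prod (Nat.one_le_iff_ne_zero.mp hk) _ G).symm
    _ ≤ _ := measure_mono fun ⟨j, ξ⟩ ⟨_, hpos, hneg⟩ ↦ sgn_fFA_add_eq hnorm horth (hs j) hpos hneg
end
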